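/- arXiv:2112.12351 — 2 statements merged into one kernel-verified Lean document; each statement's English description precedes it below -/
import Mathlib

section
/- The function v ↦ v(1-v)/φ(Φ^{-1}(v)) is bounded on (0,1); equivalently, there exists a constant M > 0 such that 1/φ(Φ^{-1}(v)) ≤ M/(v(1-v)) for all v ∈ (0,1). -/
open MeasureTheory Set

/-- The standard normal density. -/
noncomputable def stdPhi (x : ℝ) : ℝ := Real.exp (-x^2/2) / Real.sqrt (2*Real.pi)

/-- The standard normal cumulative distribution function. -/
noncomputable def stdCDF (x : ℝ) : ℝ := ∫ t in Set.Iic x, stdPhi t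

/-!
Comparing `φ(t)` with `t φ(t) / x` on `(x, ∞)`, where `t φ(t)` has the explicit antiderivative
`-φ`, gives Mills' bound `1 - Φ(x) ≤ φ(x) / x` for `x > 0`; its mirror image is
`Φ(x) ≤ φ(x) / (-x)` for `x < 0`. Hence `Φ(1 - Φ) ≤ φ` for `|x| ≥ 1`, while on `[-1, 1]`
one has `Φ(1 - Φ) ≤ 1/4` and `φ ≥ φ(1)`. Substituting `x = Φ⁻¹(v)` gives the bound with
`M = 1 + 1 / (4 φ(1))`.
-/

open Filter Topology ProbabilityTheory

lemma stdPhi_eq_gaussianPDFReal : stdPhi = gaussianPDFReal 0 1 := by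
  ext x
  simp [stdPhi, gaussianPDFReal, div_eq_inv_mul]

lemma stdPhi_pos (x : ℝ) : 0 < stdPhi x := by
  unfold stdPhi; positivity

lemma integrable_stdPhi : Integrable stdPhi :=
  stdPhi_eq_gaussianPDFReal ▸ integrable_gaussianPDFReal 0 1

lemma integral_stdPhi : ∫ t, stdPhi t = 1 :=
  stdPhi_eq_gaussianPDFReal ▸ integral_gaussianPDFReal_eq_one 0 one_ne_zero

lemma integrable_mul_stdPhi : Integrable fun t ↦ t * stdPhi t :=
  ((integrable_mul_exp_neg_mul_sq (b := 1 / 2) (by norm_num)).div_const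
    (Real.sqrt (2 * Real.pi))).congr
    (.of_forall fun t ↦ by simp only [stdPhi]; ring_nf)

lemma hasDerivAt_stdPhi (x : ℝ) : HasDerivAt stdPhi (-(x * stdPhi x)) x := by
  have h : HasDerivAt (fun t : ℝ ↦ -t ^ 2 / 2) (-x) x := by
    simpa using ((hasDerivAt_pow 2 x).neg.div_const 2).congr_deriv (by push_cast; ring)
  exact (h.exp.div_const _).congr_deriv (by unfold stdPhi; ring)

lemma tendsto_stdPhi_cocompact : Tendsto stdPhi (cocompact ℝ) (𝓝 0) := by
  have := (tendsto_rpow_abs_mul_exp_neg_mul_sq_cocompact (a := 1 / 2) (by norm_num) 0).div_const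
    (Real.sqrt (2 * Real.pi))
  simp only [Real.rpow_zero, one_mul, zero_div] at this
  exact this.congr fun x ↦ by simp only [stdPhi]; ring_nf

lemma stdPhi_le_stdPhi_of_abs_le {x y : ℝ} (h : |x| ≤ |y|) : stdPhi y ≤ stdPhi x := by
  unfold stdPhi
  gcongr Real.exp ?_ / _
  linarith [sq_le_sq.2 h]

lemma integral_Ioi_mul_stdPhi (a : ℝ) : ∫ t in Ioi a, t * stdPhi t = stdPhi a := by
  have := integral_Ioi_of_hasDerivAt_of_tendsto' (f := fun t ↦ -stdPhi t) (a := a)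
    (fun x _ ↦ (hasDerivAt_stdPhi x).neg.congr_deriv (neg_neg _))
    integrable_mul_stdPhi.integrableOn
    (tendsto_stdPhi_cocompact.mono_left atTop_le_cocompact).neg
  simpa [integral_neg] using this

lemma integral_Iic_mul_stdPhi (a : ℝ) : ∫ t in Iic a, t * stdPhi t = -stdPhi a := by
  have := integral_Iic_of_hasDerivAt_of_tendsto' (f := stdPhi) (a := a)
    (fun x _ ↦ hasDerivAt_stdPhi x) (integrable_mul_stdPhi.neg.integrableOn)
    (tendsto_stdPhi_cocompact.mono_left atBot_le_cocompact)
  rw [integral_neg] at this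
  linarith

lemma one_sub_stdCDF (x : ℝ) : 1 - stdCDF x = ∫ t in Ioi x, stdPhi t := by
  rw [← integral_stdPhi, ← intervalIntegral.integral_Iic_add_Ioi integrable_stdPhi.integrableOn
    integrable_stdPhi.integrableOn, stdCDF, add_sub_cancel_left]

lemma stdCDF_nonneg (x : ℝ) : 0 ≤ stdCDF x :=
  setIntegral_nonneg measurableSet_Iic fun t _ ↦ (stdPhi_pos t).le

lemma stdCDF_le_one (x : ℝ) : stdCDF x ≤ 1 := by
  have : 0 ≤ 1 - stdCDF x :=
    one_sub_stdCDF x ▸ setIntegral_nonneg measurableSet_Ioi fun t _ ↦ (stdPhi_pos t).le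
  linarith

lemma one_sub_stdCDF_le_stdPhi_div {x : ℝ} (hx : 0 < x) : 1 - stdCDF x ≤ stdPhi x / x := by
  rw [one_sub_stdCDF, ← integral_Ioi_mul_stdPhi, ← integral_div]
  refine setIntegral_mono_on integrable_stdPhi.integrableOn
    (integrable_mul_stdPhi.div_const x).integrableOn measurableSet_Ioi fun t ht ↦ ?_
  rw [le_div_iff₀ hx]
  exact mul_le_mul_of_nonneg_left (le_of_lt ht) (stdPhi_pos t).le |>.trans_eq (mul_comm _ _)

lemma stdCDF_le_stdPhi_div_neg {x : ℝ} (hx : x < 0) : stdCDF x ≤ stdPhi x / -x := by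
  rw [stdCDF, div_neg, ← neg_div, ← integral_Iic_mul_stdPhi, ← integral_div]
  refine setIntegral_mono_on integrable_stdPhi.integrableOn
    (integrable_mul_stdPhi.div_const x).integrableOn measurableSet_Iic fun t ht ↦ ?_
  rw [le_div_iff_of_neg hx]
  nlinarith [stdPhi_pos t, mem_Iic.1 ht]

lemma stdCDF_mul_one_sub_stdCDF_le (x : ℝ) :
    stdCDF x * (1 - stdCDF x) ≤ (1 + 1 / (4 * stdPhi 1)) * stdPhi x := by
  have hΦ₀ := stdCDF_nonneg x
  have hΦ₁ := stdCDF_le_one x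
  have hφ := stdPhi_pos x
  have hφ₁ := stdPhi_pos 1
  have hφ_le : stdPhi x ≤ (1 + 1 / (4 * stdPhi 1)) * stdPhi x :=
    le_mul_of_one_le_left hφ.le (le_add_of_nonneg_right (by positivity))
  rcases le_or_gt 1 x with h₁ | h₁
  · calc stdCDF x * (1 - stdCDF x) ≤ 1 - stdCDF x := mul_le_of_le_one_left (by linarith) hΦ₁
      _ ≤ stdPhi x / x := one_sub_stdCDF_le_stdPhi_div (by linarith)
      _ ≤ stdPhi x := div_le_self hφ.le h₁
      _ ≤ _ := hφ_le
  rcases le_or_gt x (-1) with h₂ | h₂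
  · calc stdCDF x * (1 - stdCDF x) ≤ stdCDF x := mul_le_of_le_one_right hΦ₀ (by linarith)
      _ ≤ stdPhi x / -x := stdCDF_le_stdPhi_div_neg (by linarith)
      _ ≤ stdPhi x := div_le_self hφ.le (by linarith)
      _ ≤ _ := hφ_le
  calc stdCDF x * (1 - stdCDF x) ≤ 1 / 4 := by nlinarith [sq_nonneg (2 * stdCDF x - 1)]
    _ = 1 / (4 * stdPhi 1) * stdPhi 1 := by field_simp
    _ ≤ 1 / (4 * stdPhi 1) * stdPhi x := by
      gcongr
      exact stdPhi_le_stdPhi_of_abs_le (by rw [abs_one]; exact abs_le.2 ⟨h₂.le, h₁.le⟩)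
    _ ≤ _ := by gcongr; exact le_add_of_nonneg_left zero_le_one

theorem stmt0_general (Φinv : ℝ → ℝ)
    (hinv : ∀ v ∈ Set.Ioo (0:ℝ) 1, stdCDF (Φinv v) = v) :
    ∃ M > (0:ℝ), ∀ v ∈ Set.Ioo (0:ℝ) 1,
      1 / stdPhi (Φinv v) ≤ M / (v * (1 - v)) := by
  refine ⟨1 + 1 / (4 * stdPhi 1), by have := stdPhi_pos 1; positivity, fun v hv ↦ ?_⟩
  rw [div_le_div_iff₀ (stdPhi_pos _) (mul_pos hv.1 (sub_pos.2 hv.2)), one_mul]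
  simpa only [hinv v hv] using stdCDF_mul_one_sub_stdCDF_le (Φinv v)

/-- There exists `M > 0` with `1/φ(Φ⁻¹ v) ≤ M/(v(1-v))` for all `v ∈ (0,1)`;
equivalently `v ↦ v(1-v)/φ(Φ⁻¹ v)` is bounded on `(0,1)`. -/
theorem stmt0 (Φinv : ℝ → ℝ)
    (hinv : ∀ v ∈ Set.Ioo (0:ℝ) 1, stdCDF (Φinv v) = v)
    (hinv' : ∀ x : ℝ, Φinv (stdCDF x) = x) :
    ∃ M > (0:ℝ), ∀ v ∈ Set.Ioo (0:ℝ) 1,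
      1 / stdPhi (Φinv v) ≤ M / (v * (1 - v)) :=
  stmt0_general Φinv hinv
end

section
/- For ω ∈ (0,1), the integral ∫_{(0,1)²} g_ω(u₁,u₂)/(u₁(1-u₁)u₂(1-u₂)) du₁ du₂ is finite, where g_ω(u₁,u₂) = min(u₁,u₂,1-u₁,1-u₂)^ω. -/
/-!
Put `m = min(u₁, u₂, 1 - u₁, 1 - u₂)` and `a = ω / 4`. Since `m` is at most each of the four
factors of the denominator, `m ^ ω ≤ (u₁ (1 - u₁) u₂ (1 - u₂)) ^ a`, so the integrand is dominated
by `B(u₁) B(u₂)` with `B(x) = x ^ (a - 1) (1 - x) ^ (a - 1)`, the integrable Beta(a, a) kernel.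
-/

open MeasureTheory Set Real

theorem integrableOn_rpow_mul_one_sub_rpow_Ioo {a b : ℝ} (ha : 0 < a) (hb : 0 < b) :
    IntegrableOn (fun x : ℝ => x ^ (a - 1) * (1 - x) ^ (b - 1)) (Ioo 0 1) := by
  have hB := (Complex.betaIntegral_convergent (u := (a : ℂ)) (v := (b : ℂ))
    (by simpa using ha) (by simpa using hb)).norm
  rw [intervalIntegrable_iff_integrableOn_Ioc_of_le zero_le_one] at hB
  refine (hB.mono_set Ioo_subset_Ioc_self).congr_fun (fun x hx => ?_) measurableSet_Ioo
  have hx1 : (0 : ℝ) < 1 - x := sub_pos.2 hx.2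
  have hcast : (1 - (x : ℂ)) = ((1 - x : ℝ) : ℂ) := by push_cast; ring
  simp only [norm_mul]
  rw [hcast, Complex.norm_cpow_eq_rpow_re_of_pos hx.1, Complex.norm_cpow_eq_rpow_re_of_pos hx1]
  norm_num

theorem MeasureTheory.IntegrableOn.mul_prod {α β L : Type*} [MeasurableSpace α]
    [MeasurableSpace β] [NormedRing L] {μ : Measure α} [SFinite μ] {ν : Measure β} [SFinite ν]
    {f : α → L} {g : β → L} {s : Set α} {t : Set β} (hf : IntegrableOn f s μ) (hg : IntegrableOn g t ν) :
    IntegrableOn (fun p : α × β => f p.1 * g p.2) (s ×ˢ t) (μ.prod ν) := by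
  rw [IntegrableOn, ← Measure.prod_restrict]
  exact Integrable.mul_prod hf hg

theorem rpow_four_mul_le_mul_rpow {m a x y z w : ℝ} (hm : 0 ≤ m) (ha : 0 ≤ a) (hx : m ≤ x)
    (hy : m ≤ y) (hz : m ≤ z) (hw : m ≤ w) :
    m ^ (4 * a) ≤ x ^ a * y ^ a * z ^ a * w ^ a := by
  calc m ^ (4 * a) = m ^ a * m ^ a * m ^ a * m ^ a := by
        rw [mul_comm, ← Nat.cast_ofNat, rpow_mul_natCast hm]; ring
    _ ≤ x ^ a * y ^ a * z ^ a * w ^ a := by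
        have hx0 := hm.trans hx
        have hy0 := hm.trans hy
        have hz0 := hm.trans hz
        gcongr

theorem norm_min_rpow_div_le_mul {ω x y : ℝ} (hω : 0 < ω) (hx : x ∈ Ioo 0 1) (hy : y ∈ Ioo 0 1) :
    ‖min (min x y) (min (1 - x) (1 - y)) ^ ω / (x * (1 - x) * y * (1 - y))‖ ≤
      x ^ (ω / 4 - 1) * (1 - x) ^ (ω / 4 - 1) * (y ^ (ω / 4 - 1) * (1 - y) ^ (ω / 4 - 1)) := by
  obtain ⟨hx0, hx1⟩ := hx
  obtain ⟨hy0, hy1⟩ := hy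
  have hx1' : 0 < 1 - x := sub_pos.2 hx1
  have hy1' : 0 < 1 - y := sub_pos.2 hy1
  set m := min (min x y) (min (1 - x) (1 - y))
  have hm : 0 < m := lt_min (lt_min hx0 hy0) (lt_min hx1' hy1')
  set a := ω / 4 with ha
  have hω4 : ω = 4 * a := by rw [ha]; ring
  rw [norm_of_nonneg (by positivity), hω4, div_le_iff₀ (by positivity), rpow_sub_one hx0.ne',
    rpow_sub_one hx1'.ne', rpow_sub_one hy0.ne', rpow_sub_one hy1'.ne']
  field_simp
  exact rpow_four_mul_le_mul_rpow hm.le (by positivity) ((min_le_left _ _).trans (min_le_left _ _))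
    ((min_le_right _ _).trans (min_le_left _ _)) ((min_le_left _ _).trans (min_le_right _ _))
    ((min_le_right _ _).trans (min_le_right _ _))

/-- For `ω ∈ (0,1)`, the integral
`∫_{(0,1)²} min(u₁,u₂,1-u₁,1-u₂)^ω / (u₁(1-u₁)u₂(1-u₂)) du₁ du₂` is finite. -/
theorem stmt11 (ω : ℝ) (hω : ω ∈ Set.Ioo (0:ℝ) 1) :
    IntegrableOn
      (fun p : ℝ × ℝ =>
        (min (min p.1 p.2) (min (1 - p.1) (1 - p.2))) ^ ω
          / (p.1 * (1 - p.1) * p.2 * (1 - p.2)))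
      (Set.Ioo (0:ℝ) 1 ×ˢ Set.Ioo (0:ℝ) 1) volume := by
  have ha : 0 < ω / 4 := by linarith [hω.1]
  have hB := integrableOn_rpow_mul_one_sub_rpow_Ioo ha ha
  refine (hB.mul_prod hB).mono' (Measurable.aestronglyMeasurable (by fun_prop)) ?_
  rw [ae_restrict_iff' (measurableSet_Ioo.prod measurableSet_Ioo)]
  exact Filter.Eventually.of_forall fun p hp => norm_min_rpow_div_le_mul hω.1 hp.1 hp.2
end
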